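/- There exists a satisfiable X_a-free Hyper²LTL sentence all of whose models have cardinality exactly 𝔠, and this holds both under standard semantics and under closed-world semantics; concretely, over AP = {+,−,s,x} the sentence φ_allSets constructed in the paper has the uncountable set T_allSets' = {{+}^n{x,+}{+}^ω | n∈ℕ} ∪ {{−}^n{x,−}{−}^ω | n∈ℕ} ∪ {(t(0)∪{s})(t(1)∪{s})(t(2)∪{s})⋯ | t ∈ (2^{{x}})^ω} as its unique model under both semantics. -/

import Mathlib

namespace Hyper2

/-! ### Traces -/

/-- A trace over atomic propositions `α` is an infinite word over `2^α`. -/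
abbrev Trace (α : Type) := ℕ → Set α

/-! ### Second-order (set) variables -/

/-- Second-order variables: the distinguished variable `all` (`Xₐ`, the set of all traces),
the distinguished variable `dis` (`X_d`, the universe of discourse), and named variables. -/
inductive SVar where
  | all : SVar
  | dis : SVar
  | var : ℕ → SVar
deriving DecidableEq

def SVar.code : SVar → ℕ
  | .all => 0
  | .dis => 1
  | .var n => n + 2

/-! ### Quantifier-free (LTL-like) formulas -/

/-- Quantifier-free formulas: atoms `a_π`, negation, disjunction, next, until. -/
inductive QF (α : Type) where
  | atom : α → ℕ → QF α
  | not : QF α → QF α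
  | or : QF α → QF α → QF α
  | next : QF α → QF α
  | untl : QF α → QF α → QF α

variable {α : Type}

/-- Satisfaction of a quantifier-free formula w.r.t. a valuation of trace
variables, at position `i`. -/
def QF.sat (v : ℕ → Trace α) : QF α → ℕ → Prop
  | .atom a π, i => a ∈ v π i
  | .not ψ, i => ¬ QF.sat v ψ i
  | .or ψ₁ ψ₂, i => QF.sat v ψ₁ i ∨ QF.sat v ψ₂ i
  | .next ψ, i => QF.sat v ψ (i + 1)
  | .untl ψ₁ ψ₂, i => ∃ j, i ≤ j ∧ QF.sat v ψ₂ j ∧ ∀ k, i ≤ k → k < j → QF.sat v ψ₁ k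

/-- The trace variables occurring in a quantifier-free formula. -/
def QF.traceVars : QF α → Set ℕ
  | .atom _ π => {π}
  | .not ψ => ψ.traceVars
  | .or ψ₁ ψ₂ => ψ₁.traceVars ∪ ψ₂.traceVars
  | .next ψ => ψ.traceVars
  | .untl ψ₁ ψ₂ => ψ₁.traceVars ∪ ψ₂.traceVars

/-- The atomic propositions occurring in a quantifier-free formula. -/
def QF.atoms : QF α → Set α
  | .atom a _ => {a}
  | .not ψ => ψ.atoms
  | .or ψ₁ ψ₂ => ψ₁.atoms ∪ ψ₂.atoms
  | .next ψ => ψ.atoms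
  | .untl ψ₁ ψ₂ => ψ₁.atoms ∪ ψ₂.atoms

/-- A numerical code for quantifier-free formulas over `AP = ℕ`. -/
def QF.code : QF ℕ → ℕ
  | .atom a π => Nat.pair 0 (Nat.pair a π)
  | .not ψ => Nat.pair 1 ψ.code
  | .or ψ₁ ψ₂ => Nat.pair 2 (Nat.pair ψ₁.code ψ₂.code)
  | .next ψ => Nat.pair 3 ψ.code
  | .untl ψ₁ ψ₂ => Nat.pair 4 (Nat.pair ψ₁.code ψ₂.code)

/-! ### Variable assignments -/

/-- A variable assignment maps trace variables to traces and
second-order variables to sets of traces. -/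
structure Assignment (α : Type) where
  tr : ℕ → Trace α
  so : SVar → Set (Trace α)

/-- Update the value of a trace variable. -/
def Assignment.updTr (Γ : Assignment α) (π : ℕ) (t : Trace α) : Assignment α :=
  { Γ with tr := Function.update Γ.tr π t }

/-- Update the value of a second-order variable. -/
def Assignment.updSo (Γ : Assignment α) (X : SVar) (T : Set (Trace α)) : Assignment α :=
  { Γ with so := Function.update Γ.so X T }

/-! ### Hyper²LTL -/

/-- Hyper²LTL formulas: a prefix of (unrestricted) second-order quantifiers and
trace quantifiers (ranging over a second-order variable), followed by a
quantifier-free formula. Second-order quantifiers bind named variables. -/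
inductive Formula (α : Type) where
  | qf : QF α → Formula α
  | existsSet : ℕ → Formula α → Formula α
  | forallSet : ℕ → Formula α → Formula α
  | existsTrace : ℕ → SVar → Formula α → Formula α
  | forallTrace : ℕ → SVar → Formula α → Formula α

/-- Standard semantics of Hyper²LTL: second-order quantifiers range over
arbitrary sets of traces. -/
def Formula.sat : Formula α → Assignment α → Prop
  | .qf ψ, Γ => ψ.sat Γ.tr 0
  | .existsSet X φ, Γ => ∃ T : Set (Trace α), Formula.sat φ (Γ.updSo (SVar.var X) T)
  | .forallSet X φ, Γ => ∀ T : Set (Trace α), Formula.sat φ (Γ.updSo (SVar.var X) T)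
  | .existsTrace π X φ, Γ => ∃ t ∈ Γ.so X, Formula.sat φ (Γ.updTr π t)
  | .forallTrace π X φ, Γ => ∀ t ∈ Γ.so X, Formula.sat φ (Γ.updTr π t)

/-- Closed-world semantics of Hyper²LTL: second-order quantifiers range only over
subsets of the universe of discourse `X_d`. -/
def Formula.satCW : Formula α → Assignment α → Prop
  | .qf ψ, Γ => ψ.sat Γ.tr 0
  | .existsSet X φ, Γ =>
      ∃ T : Set (Trace α), T ⊆ Γ.so SVar.dis ∧ Formula.satCW φ (Γ.updSo (SVar.var X) T)
  | .forallSet X φ, Γ =>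
      ∀ T : Set (Trace α), T ⊆ Γ.so SVar.dis → Formula.satCW φ (Γ.updSo (SVar.var X) T)
  | .existsTrace π X φ, Γ => ∃ t ∈ Γ.so X, Formula.satCW φ (Γ.updTr π t)
  | .forallTrace π X φ, Γ => ∀ t ∈ Γ.so X, Formula.satCW φ (Γ.updTr π t)

/-- Free trace variables of a Hyper²LTL formula. -/
def Formula.freeTraceVars : Formula α → Set ℕ
  | .qf ψ => ψ.traceVars
  | .existsSet _ φ => φ.freeTraceVars
  | .forallSet _ φ => φ.freeTraceVars
  | .existsTrace π _ φ => φ.freeTraceVars \ {π}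
  | .forallTrace π _ φ => φ.freeTraceVars \ {π}

/-- Free second-order variables of a Hyper²LTL formula. -/
def Formula.freeSetVars : Formula α → Set SVar
  | .qf _ => ∅
  | .existsSet X φ => φ.freeSetVars \ {SVar.var X}
  | .forallSet X φ => φ.freeSetVars \ {SVar.var X}
  | .existsTrace _ X φ => insert X φ.freeSetVars
  | .forallTrace _ X φ => insert X φ.freeSetVars

/-- A sentence is a formula in which only `Xₐ` and `X_d` may occur free. -/
def Formula.IsSentence (φ : Formula α) : Prop :=
  φ.freeTraceVars = ∅ ∧ φ.freeSetVars ⊆ {SVar.all, SVar.dis}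

/-- A formula is `Xₐ`-free if the distinguished variable `Xₐ` is not used. -/
def Formula.XaFree : Formula α → Prop
  | .qf _ => True
  | .existsSet _ φ => φ.XaFree
  | .forallSet _ φ => φ.XaFree
  | .existsTrace _ X φ => X ≠ SVar.all ∧ φ.XaFree
  | .forallTrace _ X φ => X ≠ SVar.all ∧ φ.XaFree

/-- A numerical code for Hyper²LTL formulas over `AP = ℕ`. -/
def Formula.code : Formula ℕ → ℕ
  | .qf ψ => Nat.pair 0 ψ.code
  | .existsSet X φ => Nat.pair 1 (Nat.pair X φ.code)
  | .forallSet X φ => Nat.pair 2 (Nat.pair X φ.code)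
  | .existsTrace π X φ => Nat.pair 3 (Nat.pair π (Nat.pair X.code φ.code))
  | .forallTrace π X φ => Nat.pair 4 (Nat.pair π (Nat.pair X.code φ.code))

/-- The initial assignment for evaluating sentences (standard semantics):
`Xₐ` is the set of all traces, `X_d` is the model `T`. -/
def initAssign (T : Set (Trace α)) : Assignment α :=
  ⟨fun _ => fun _ => ∅, fun X =>
    match X with
    | SVar.all => Set.univ
    | SVar.dis => T
    | SVar.var _ => ∅⟩

/-- The initial assignment for evaluating `Xₐ`-free sentences under
closed-world semantics: `X_d` is the model `T`. -/
def initAssignCW (T : Set (Trace α)) : Assignment α :=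
  ⟨fun _ => fun _ => ∅, fun X =>
    match X with
    | SVar.dis => T
    | _ => ∅⟩

/-- `T ⊨ φ`: the set of traces `T` is a model of `φ` (standard semantics). -/
def Models (T : Set (Trace α)) (φ : Formula α) : Prop := φ.sat (initAssign T)

/-- `T ⊨_cw φ`: the set of traces `T` satisfies `φ` under closed-world semantics. -/
def ModelsCW (T : Set (Trace α)) (φ : Formula α) : Prop := φ.satCW (initAssignCW T)

/-! ### Finite transition systems -/

/-- A finite transition system over `AP = ℕ`: vertices are `0, …, V-1`,
with an edge list, initial vertices, and a labeling of vertices by (finite)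
sets of atomic propositions. -/
structure TS where
  V : ℕ
  E : List (ℕ × ℕ)
  I : List ℕ
  label : List (List ℕ)

/-- Well-formedness of a transition system: edges and initial vertices are in range,
every vertex has an outgoing edge, and every vertex has a label. -/
def TS.WF (𝔗 : TS) : Prop :=
  (∀ e ∈ 𝔗.E, e.1 < 𝔗.V ∧ e.2 < 𝔗.V) ∧
  (∀ v, v < 𝔗.V → ∃ w, (v, w) ∈ 𝔗.E) ∧
  (∀ v ∈ 𝔗.I, v < 𝔗.V) ∧
  𝔗.label.length = 𝔗.V

/-- The label of a vertex, as a set of atomic propositions. -/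
def TS.labelSet (𝔗 : TS) (v : ℕ) : Set ℕ := {a | a ∈ 𝔗.label.getD v []}

/-- Paths through a transition system, starting in an initial vertex. -/
def TS.IsPath (𝔗 : TS) (ρ : ℕ → ℕ) : Prop :=
  ρ 0 ∈ 𝔗.I ∧ ∀ n, (ρ n, ρ (n + 1)) ∈ 𝔗.E

/-- The set of traces of a transition system. -/
def TS.traces (𝔗 : TS) : Set (Trace ℕ) :=
  {t | ∃ ρ : ℕ → ℕ, 𝔗.IsPath ρ ∧ t = fun n => 𝔗.labelSet (ρ n)}

/-- A numerical code for transition systems. -/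
def TS.code (𝔗 : TS) : ℕ :=
  Nat.pair 𝔗.V (Nat.pair (Encodable.encode 𝔗.E)
    (Nat.pair (Encodable.encode 𝔗.I) (Encodable.encode 𝔗.label)))

/-! ### Arithmetic of orders one, two and three -/

/-- First-order terms over the signature `(+, ·)`. -/
inductive Term3 where
  | var : ℕ → Term3
  | plus : Term3 → Term3 → Term3
  | times : Term3 → Term3 → Term3

def Term3.val (v : ℕ → ℕ) : Term3 → ℕ
  | .var x => v x
  | .plus t u => t.val v + u.val v
  | .times t u => t.val v * u.val v

def Term3.vars : Term3 → Set ℕ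
  | .var x => {x}
  | .plus t u => t.vars ∪ u.vars
  | .times t u => t.vars ∪ u.vars

def Term3.code : Term3 → ℕ
  | .var x => Nat.pair 0 x
  | .plus t u => Nat.pair 1 (Nat.pair t.code u.code)
  | .times t u => Nat.pair 2 (Nat.pair t.code u.code)

/-- Formulas of third-order arithmetic over the signature `(+, ·, <, ∈)`, with
quantification over natural numbers (type 0), sets of natural numbers (type 1),
and sets of sets of natural numbers (type 2). -/
inductive Form3 where
  | lt : Term3 → Term3 → Form3
  | mem1 : Term3 → ℕ → Form3
  | mem2 : ℕ → ℕ → Form3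
  | not : Form3 → Form3
  | or : Form3 → Form3 → Form3
  | ex0 : ℕ → Form3 → Form3
  | all0 : ℕ → Form3 → Form3
  | ex1 : ℕ → Form3 → Form3
  | all1 : ℕ → Form3 → Form3
  | ex2 : ℕ → Form3 → Form3
  | all2 : ℕ → Form3 → Form3

/-- Satisfaction of third-order arithmetic over the standard structure `(ℕ, +, ·, <, ∈)`,
w.r.t. valuations of first-, second- and third-order variables. -/
def Form3.Sat : (ℕ → ℕ) → (ℕ → Set ℕ) → (ℕ → Set (Set ℕ)) → Form3 → Prop
  | v0, _, _, .lt t u => t.val v0 < u.val v0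
  | v0, v1, _, .mem1 t X => t.val v0 ∈ v1 X
  | _, v1, v2, .mem2 X Y => v1 X ∈ v2 Y
  | v0, v1, v2, .not φ => ¬ Form3.Sat v0 v1 v2 φ
  | v0, v1, v2, .or φ ψ => Form3.Sat v0 v1 v2 φ ∨ Form3.Sat v0 v1 v2 ψ
  | v0, v1, v2, .ex0 x φ => ∃ n : ℕ, Form3.Sat (Function.update v0 x n) v1 v2 φ
  | v0, v1, v2, .all0 x φ => ∀ n : ℕ, Form3.Sat (Function.update v0 x n) v1 v2 φ
  | v0, v1, v2, .ex1 X φ => ∃ S : Set ℕ, Form3.Sat v0 (Function.update v1 X S) v2 φ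
  | v0, v1, v2, .all1 X φ => ∀ S : Set ℕ, Form3.Sat v0 (Function.update v1 X S) v2 φ
  | v0, v1, v2, .ex2 X φ => ∃ S : Set (Set ℕ), Form3.Sat v0 v1 (Function.update v2 X S) φ
  | v0, v1, v2, .all2 X φ => ∀ S : Set (Set ℕ), Form3.Sat v0 v1 (Function.update v2 X S) φ

def Form3.free0 : Form3 → Set ℕ
  | .lt t u => t.vars ∪ u.vars
  | .mem1 t _ => t.vars
  | .mem2 _ _ => ∅
  | .not φ => φ.free0
  | .or φ ψ => φ.free0 ∪ ψ.free0
  | .ex0 x φ => φ.free0 \ {x}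
  | .all0 x φ => φ.free0 \ {x}
  | .ex1 _ φ => φ.free0
  | .all1 _ φ => φ.free0
  | .ex2 _ φ => φ.free0
  | .all2 _ φ => φ.free0

def Form3.free1 : Form3 → Set ℕ
  | .lt _ _ => ∅
  | .mem1 _ X => {X}
  | .mem2 X _ => {X}
  | .not φ => φ.free1
  | .or φ ψ => φ.free1 ∪ ψ.free1
  | .ex0 _ φ => φ.free1
  | .all0 _ φ => φ.free1
  | .ex1 X φ => φ.free1 \ {X}
  | .all1 X φ => φ.free1 \ {X}
  | .ex2 _ φ => φ.free1
  | .all2 _ φ => φ.free1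

def Form3.free2 : Form3 → Set ℕ
  | .lt _ _ => ∅
  | .mem1 _ _ => ∅
  | .mem2 _ Y => {Y}
  | .not φ => φ.free2
  | .or φ ψ => φ.free2 ∪ ψ.free2
  | .ex0 _ φ => φ.free2
  | .all0 _ φ => φ.free2
  | .ex1 _ φ => φ.free2
  | .all1 _ φ => φ.free2
  | .ex2 X φ => φ.free2 \ {X}
  | .all2 X φ => φ.free2 \ {X}

/-- Sentences of (third-order) arithmetic: no free variables of any order. -/
def Form3.IsSentence (φ : Form3) : Prop :=
  φ.free0 = ∅ ∧ φ.free1 = ∅ ∧ φ.free2 = ∅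

/-- Truth of a formula of arithmetic in `(ℕ, +, ·, <, ∈)` (under default valuations;
for sentences the valuations are irrelevant). -/
def Form3.Holds (φ : Form3) : Prop :=
  φ.Sat (fun _ => 0) (fun _ => ∅) (fun _ => ∅)

/-- Formulas of second-order arithmetic: no third-order variables or quantifiers. -/
def Form3.SecondOrder : Form3 → Prop
  | .lt _ _ => True
  | .mem1 _ _ => True
  | .mem2 _ _ => False
  | .not φ => φ.SecondOrder
  | .or φ ψ => φ.SecondOrder ∧ ψ.SecondOrder
  | .ex0 _ φ => φ.SecondOrder
  | .all0 _ φ => φ.SecondOrder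
  | .ex1 _ φ => φ.SecondOrder
  | .all1 _ φ => φ.SecondOrder
  | .ex2 _ _ => False
  | .all2 _ _ => False

/-- First-order formulas: arbitrary quantification over numbers, no set quantifiers
(free second-order variables are allowed). -/
def Form3.FirstOrderMatrix : Form3 → Prop
  | .lt _ _ => True
  | .mem1 _ _ => True
  | .mem2 _ _ => False
  | .not φ => φ.FirstOrderMatrix
  | .or φ ψ => φ.FirstOrderMatrix ∧ ψ.FirstOrderMatrix
  | .ex0 _ φ => φ.FirstOrderMatrix
  | .all0 _ φ => φ.FirstOrderMatrix
  | .ex1 _ _ => False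
  | .all1 _ _ => False
  | .ex2 _ _ => False
  | .all2 _ _ => False

/-- Formulas with arbitrary quantification over type-0 and type-1 objects but no
third-order quantifiers (free third-order variables are allowed). -/
def Form3.NoThirdQuant : Form3 → Prop
  | .lt _ _ => True
  | .mem1 _ _ => True
  | .mem2 _ _ => True
  | .not φ => φ.NoThirdQuant
  | .or φ ψ => φ.NoThirdQuant ∧ ψ.NoThirdQuant
  | .ex0 _ φ => φ.NoThirdQuant
  | .all0 _ φ => φ.NoThirdQuant
  | .ex1 _ φ => φ.NoThirdQuant
  | .all1 _ φ => φ.NoThirdQuant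
  | .ex2 _ _ => False
  | .all2 _ _ => False

/-- Σ¹₁-formulas: a block of existential second-order quantifiers followed by a
first-order matrix. -/
inductive Form3.IsSigma11 : Form3 → Prop
  | base (φ : Form3) : φ.FirstOrderMatrix → Form3.IsSigma11 φ
  | step (X : ℕ) (φ : Form3) : Form3.IsSigma11 φ → Form3.IsSigma11 (Form3.ex1 X φ)

/-- Σ²₁-formulas: a block of existential third-order quantifiers followed by a matrix
with arbitrary type-0 and type-1 quantification. -/
inductive Form3.IsSigma21 : Form3 → Prop
  | base (φ : Form3) : φ.NoThirdQuant → Form3.IsSigma21 φ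
  | step (X : ℕ) (φ : Form3) : Form3.IsSigma21 φ → Form3.IsSigma21 (Form3.ex2 X φ)

/-- The class Σ¹₁ of sets of natural numbers. -/
def InSigma11 (A : Set ℕ) : Prop :=
  ∃ φ : Form3, φ.IsSigma11 ∧ φ.free0 ⊆ {0} ∧ φ.free1 = ∅ ∧ φ.free2 = ∅ ∧
    ∀ n : ℕ, n ∈ A ↔ φ.Sat (Function.update (fun _ => 0) 0 n) (fun _ => ∅) (fun _ => ∅)

/-- The class Σ²₁ of sets of natural numbers. -/
def InSigma21 (A : Set ℕ) : Prop :=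
  ∃ φ : Form3, φ.IsSigma21 ∧ φ.free0 ⊆ {0} ∧ φ.free1 = ∅ ∧ φ.free2 = ∅ ∧
    ∀ n : ℕ, n ∈ A ↔ φ.Sat (Function.update (fun _ => 0) 0 n) (fun _ => ∅) (fun _ => ∅)

def Form3.code : Form3 → ℕ
  | .lt t u => Nat.pair 0 (Nat.pair t.code u.code)
  | .mem1 t X => Nat.pair 1 (Nat.pair t.code X)
  | .mem2 X Y => Nat.pair 2 (Nat.pair X Y)
  | .not φ => Nat.pair 3 φ.code
  | .or φ ψ => Nat.pair 4 (Nat.pair φ.code ψ.code)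
  | .ex0 x φ => Nat.pair 5 (Nat.pair x φ.code)
  | .all0 x φ => Nat.pair 6 (Nat.pair x φ.code)
  | .ex1 X φ => Nat.pair 7 (Nat.pair X φ.code)
  | .all1 X φ => Nat.pair 8 (Nat.pair X φ.code)
  | .ex2 X φ => Nat.pair 9 (Nat.pair X φ.code)
  | .all2 X φ => Nat.pair 10 (Nat.pair X φ.code)

/-- The decision problem "truth in third-order arithmetic". -/
def ThirdOrderTruth : Set Form3 := {φ | φ.IsSentence ∧ φ.Holds}

/-- The decision problem "truth in second-order arithmetic". -/
def SecondOrderTruth : Set Form3 := {φ | φ.SecondOrder ∧ φ.IsSentence ∧ φ.Holds}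

/-! ### Polynomial-time reductions -/

/-- A function on natural numbers is polynomial-time computable if it is computable
in polynomial time by a two-stack Turing machine w.r.t. the standard binary encoding. -/
def PolyTimeComputable (f : ℕ → ℕ) : Prop :=
  Nonempty (Turing.TM2ComputableInPolyTime Computability.encodingNatBool.encode
    Computability.encodingNatBool.encode f)

/-- `A` many-one reduces to `B` in polynomial time (problem instances are coded
into `ℕ` via `cα`, `cβ`): there is a map `g` on instances, implemented by a
polynomial-time computable function on codes, such that `x ∈ A ↔ g x ∈ B`. -/
def PolyTimeReducible {σ τ : Type} (cα : σ → ℕ) (cβ : τ → ℕ) (A : Set σ) (B : Set τ) : Prop :=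
  ∃ (g : σ → τ) (f : ℕ → ℕ), PolyTimeComputable f ∧
    (∀ x, f (cα x) = cβ (g x)) ∧ ∀ x, x ∈ A ↔ g x ∈ B

/-- Two decision problems are polynomial-time equivalent if each reduces to the
other in polynomial time. -/
def PolyTimeEquivalent {σ τ : Type} (cα : σ → ℕ) (cβ : τ → ℕ) (A : Set σ) (B : Set τ) : Prop :=
  PolyTimeReducible cα cβ A B ∧ PolyTimeReducible cβ cα B A

/-! ### Hyper²LTL decision problems -/

def H2SAT : Set (Formula ℕ) := {φ | φ.IsSentence ∧ ∃ T : Set (Trace ℕ), Models T φ}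

def H2SATcw : Set (Formula ℕ) :=
  {φ | φ.IsSentence ∧ φ.XaFree ∧ ∃ T : Set (Trace ℕ), ModelsCW T φ}

def H2FinSAT : Set (Formula ℕ) := {φ | φ.IsSentence ∧ ∃ 𝔗 : TS, 𝔗.WF ∧ Models 𝔗.traces φ}

def H2FinSATcw : Set (Formula ℕ) :=
  {φ | φ.IsSentence ∧ φ.XaFree ∧ ∃ 𝔗 : TS, 𝔗.WF ∧ ModelsCW 𝔗.traces φ}

def H2MC : Set (TS × Formula ℕ) := {p | p.1.WF ∧ p.2.IsSentence ∧ Models p.1.traces p.2}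

def H2MCcw : Set (TS × Formula ℕ) :=
  {p | p.1.WF ∧ p.2.IsSentence ∧ p.2.XaFree ∧ ModelsCW p.1.traces p.2}

/-- Coding of model-checking instances. -/
def mcCode (p : TS × Formula ℕ) : ℕ := Nat.pair p.1.code p.2.code

/-! ### Hyper²LTL_mm : minimality/maximality-guarded second-order quantifiers -/

inductive MinMax where
  | min : MinMax
  | max : MinMax
deriving DecidableEq

def MinMax.code : MinMax → ℕ
  | .min => 0
  | .max => 1

/-- Hyper²LTL_mm formulas: second-order quantifiers are guarded and range over
minimal (⋎) resp. maximal (⋏) sets satisfying the guard. -/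
inductive MMFormula (α : Type) where
  | qf : QF α → MMFormula α
  | existsSetG : ℕ → MinMax → MMFormula α → MMFormula α → MMFormula α
  | forallSetG : ℕ → MinMax → MMFormula α → MMFormula α → MMFormula α
  | existsTrace : ℕ → SVar → MMFormula α → MMFormula α
  | forallTrace : ℕ → SVar → MMFormula α → MMFormula α

/-- Minimal/maximal solutions of a guard predicate (standard semantics). -/
def IsSol (P : Set (Trace α) → Prop) : MinMax → Set (Trace α) → Prop
  | .min, T => P T ∧ ∀ T', T' ⊂ T → ¬ P T'
  | .max, T => P T ∧ ∀ T', T ⊂ T' → ¬ P T'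

/-- Minimal/maximal solutions among subsets of the universe of discourse `D`
(closed-world semantics). -/
def IsSolCW (D : Set (Trace α)) (P : Set (Trace α) → Prop) : MinMax → Set (Trace α) → Prop
  | .min, T => T ⊆ D ∧ P T ∧ ∀ T', T' ⊂ T → ¬ P T'
  | .max, T => T ⊆ D ∧ P T ∧ ∀ T', T ⊂ T' → T' ⊆ D → ¬ P T'

/-- Standard semantics of Hyper²LTL_mm. -/
def MMFormula.sat : MMFormula α → Assignment α → Prop
  | .qf ψ, Γ => ψ.sat Γ.tr 0
  | .existsSetG X mm g b, Γ =>
      ∃ T, IsSol (fun T' => MMFormula.sat g (Γ.updSo (SVar.var X) T')) mm T ∧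
        MMFormula.sat b (Γ.updSo (SVar.var X) T)
  | .forallSetG X mm g b, Γ =>
      ∀ T, IsSol (fun T' => MMFormula.sat g (Γ.updSo (SVar.var X) T')) mm T →
        MMFormula.sat b (Γ.updSo (SVar.var X) T)
  | .existsTrace π X φ, Γ => ∃ t ∈ Γ.so X, MMFormula.sat φ (Γ.updTr π t)
  | .forallTrace π X φ, Γ => ∀ t ∈ Γ.so X, MMFormula.sat φ (Γ.updTr π t)

/-- Closed-world semantics of Hyper²LTL_mm. -/
def MMFormula.satCW : MMFormula α → Assignment α → Prop
  | .qf ψ, Γ => ψ.sat Γ.tr 0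
  | .existsSetG X mm g b, Γ =>
      ∃ T, IsSolCW (Γ.so SVar.dis) (fun T' => MMFormula.satCW g (Γ.updSo (SVar.var X) T')) mm T ∧
        MMFormula.satCW b (Γ.updSo (SVar.var X) T)
  | .forallSetG X mm g b, Γ =>
      ∀ T, IsSolCW (Γ.so SVar.dis) (fun T' => MMFormula.satCW g (Γ.updSo (SVar.var X) T')) mm T →
        MMFormula.satCW b (Γ.updSo (SVar.var X) T)
  | .existsTrace π X φ, Γ => ∃ t ∈ Γ.so X, MMFormula.satCW φ (Γ.updTr π t)
  | .forallTrace π X φ, Γ => ∀ t ∈ Γ.so X, MMFormula.satCW φ (Γ.updTr π t)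

def MMFormula.freeTraceVars : MMFormula α → Set ℕ
  | .qf ψ => ψ.traceVars
  | .existsSetG _ _ g b => g.freeTraceVars ∪ b.freeTraceVars
  | .forallSetG _ _ g b => g.freeTraceVars ∪ b.freeTraceVars
  | .existsTrace π _ φ => φ.freeTraceVars \ {π}
  | .forallTrace π _ φ => φ.freeTraceVars \ {π}

def MMFormula.freeSetVars : MMFormula α → Set SVar
  | .qf _ => ∅
  | .existsSetG X _ g b => (g.freeSetVars ∪ b.freeSetVars) \ {SVar.var X}
  | .forallSetG X _ g b => (g.freeSetVars ∪ b.freeSetVars) \ {SVar.var X}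
  | .existsTrace _ X φ => insert X φ.freeSetVars
  | .forallTrace _ X φ => insert X φ.freeSetVars

def MMFormula.IsSentence (φ : MMFormula α) : Prop :=
  φ.freeTraceVars = ∅ ∧ φ.freeSetVars ⊆ {SVar.all, SVar.dis}

def MMFormula.XaFree : MMFormula α → Prop
  | .qf _ => True
  | .existsSetG _ _ g b => g.XaFree ∧ b.XaFree
  | .forallSetG _ _ g b => g.XaFree ∧ b.XaFree
  | .existsTrace _ X φ => X ≠ SVar.all ∧ φ.XaFree
  | .forallTrace _ X φ => X ≠ SVar.all ∧ φ.XaFree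

/-- The fragment Hyper²LTL_mm^⋏: only maximality-guarded second-order quantifiers. -/
def MMFormula.OnlyMax : MMFormula α → Prop
  | .qf _ => True
  | .existsSetG _ mm g b => mm = MinMax.max ∧ g.OnlyMax ∧ b.OnlyMax
  | .forallSetG _ mm g b => mm = MinMax.max ∧ g.OnlyMax ∧ b.OnlyMax
  | .existsTrace _ _ φ => φ.OnlyMax
  | .forallTrace _ _ φ => φ.OnlyMax

/-- The fragment Hyper²LTL_mm^⋎: only minimality-guarded second-order quantifiers. -/
def MMFormula.OnlyMin : MMFormula α → Prop
  | .qf _ => True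
  | .existsSetG _ mm g b => mm = MinMax.min ∧ g.OnlyMin ∧ b.OnlyMin
  | .forallSetG _ mm g b => mm = MinMax.min ∧ g.OnlyMin ∧ b.OnlyMin
  | .existsTrace _ _ φ => φ.OnlyMin
  | .forallTrace _ _ φ => φ.OnlyMin

def MMFormula.atoms : MMFormula α → Set α
  | .qf ψ => ψ.atoms
  | .existsSetG _ _ g b => g.atoms ∪ b.atoms
  | .forallSetG _ _ g b => g.atoms ∪ b.atoms
  | .existsTrace _ _ φ => φ.atoms
  | .forallTrace _ _ φ => φ.atoms

def MMFormula.code : MMFormula ℕ → ℕ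
  | .qf ψ => Nat.pair 0 ψ.code
  | .existsSetG X mm g b => Nat.pair 1 (Nat.pair X (Nat.pair mm.code (Nat.pair g.code b.code)))
  | .forallSetG X mm g b => Nat.pair 2 (Nat.pair X (Nat.pair mm.code (Nat.pair g.code b.code)))
  | .existsTrace π X φ => Nat.pair 3 (Nat.pair π (Nat.pair X.code φ.code))
  | .forallTrace π X φ => Nat.pair 4 (Nat.pair π (Nat.pair X.code φ.code))

def MMModels (T : Set (Trace α)) (φ : MMFormula α) : Prop := φ.sat (initAssign T)

def MMModelsCW (T : Set (Trace α)) (φ : MMFormula α) : Prop := φ.satCW (initAssignCW T)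

/-! ### lfp-Hyper²LTL_mm : quantification over least fixed points -/

/-- A guard `φ^con = π̇₁ ▷ Y ∧ ⋯ ∧ π̇ₙ ▷ Y ∧ ∀π̈₁ ∈ Z₁.⋯∀π̈_{n'} ∈ Z_{n'}. (ψ^step → π̈_m ▷ Y)`
for a least-fixed-point second-order quantifier. -/
structure LfpGuard (α : Type) where
  nSeeds : ℕ
  seed : Fin nSeeds → ℕ
  nUniv : ℕ
  univVar : Fin nUniv → ℕ
  univRange : Fin nUniv → SVar
  target : Fin nUniv
  step : QF α

/-- The monotone operator on sets of traces induced by a guard (for the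
second-order variable `Y`, w.r.t. the assignment `Γ`). -/
def LfpGuard.op (g : LfpGuard α) (Y : ℕ) (Γ : Assignment α) (S : Set (Trace α)) :
    Set (Trace α) :=
  S ∪ {t | ∃ i : Fin g.nSeeds, t = Γ.tr (g.seed i)} ∪
    {t | ∃ ts : Fin g.nUniv → Trace α,
      (∀ i, ts i ∈ (if g.univRange i = SVar.var Y then S else Γ.so (g.univRange i))) ∧
      g.step.sat
        ((List.ofFn fun i => (g.univVar i, ts i)).foldr
          (fun p w => Function.update w p.1 p.2) Γ.tr) 0 ∧
      t = ts g.target}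

/-- The least fixed point of the operator induced by a guard. -/
def LfpGuard.lfp (g : LfpGuard α) (Y : ℕ) (Γ : Assignment α) : Set (Trace α) :=
  ⋃ n : ℕ, (g.op Y Γ)^[n] ∅

/-- The trace variables occurring free in a guard. -/
def LfpGuard.freeTraceVars (g : LfpGuard α) : Set ℕ :=
  {π | ∃ i, g.seed i = π} ∪ (g.step.traceVars \ {π | ∃ i, g.univVar i = π})

def LfpGuard.code (g : LfpGuard ℕ) : ℕ :=
  Nat.pair (Encodable.encode (List.ofFn g.seed))
    (Nat.pair (Encodable.encode (List.ofFn g.univVar))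
      (Nat.pair (Encodable.encode (List.ofFn fun i => SVar.code (g.univRange i)))
        (Nat.pair g.target.val g.step.code)))

/-- lfp-Hyper²LTL_mm formulas: blocks of trace quantifiers and least-fixed-point
second-order quantifiers, followed by a quantifier-free formula. (Since every guard has
a unique minimal solution, existential and universal second-order quantification
coincide and are represented by the single constructor `fix`.) -/
inductive LfpFormula (α : Type) where
  | qf : QF α → LfpFormula α
  | existsTrace : ℕ → SVar → LfpFormula α → LfpFormula α
  | forallTrace : ℕ → SVar → LfpFormula α → LfpFormula α
  | fix : ℕ → LfpGuard α → LfpFormula α → LfpFormula α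

def LfpFormula.sat : LfpFormula α → Assignment α → Prop
  | .qf ψ, Γ => ψ.sat Γ.tr 0
  | .existsTrace π X φ, Γ => ∃ t ∈ Γ.so X, LfpFormula.sat φ (Γ.updTr π t)
  | .forallTrace π X φ, Γ => ∀ t ∈ Γ.so X, LfpFormula.sat φ (Γ.updTr π t)
  | .fix Y g φ, Γ => LfpFormula.sat φ (Γ.updSo (SVar.var Y) (g.lfp Y Γ))

/-- Scoping: trace quantifiers and guards only refer to second-order variables that are
in scope (`Xₐ`, `X_d`, and the previously introduced fixed-point variables). -/
def LfpFormula.ScopeOK : LfpFormula α → Set SVar → Prop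
  | .qf _, _ => True
  | .existsTrace _ X φ, A => X ∈ A ∧ LfpFormula.ScopeOK φ A
  | .forallTrace _ X φ, A => X ∈ A ∧ LfpFormula.ScopeOK φ A
  | .fix Y g φ, A => (∀ i, g.univRange i ∈ insert (SVar.var Y) A) ∧
      LfpFormula.ScopeOK φ (insert (SVar.var Y) A)

def LfpFormula.freeTraceVars : LfpFormula α → Set ℕ
  | .qf ψ => ψ.traceVars
  | .existsTrace π _ φ => φ.freeTraceVars \ {π}
  | .forallTrace π _ φ => φ.freeTraceVars \ {π}
  | .fix _ g φ => g.freeTraceVars ∪ φ.freeTraceVars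

def LfpFormula.IsSentence (φ : LfpFormula α) : Prop :=
  φ.freeTraceVars = ∅ ∧ φ.ScopeOK {SVar.all, SVar.dis}

def LfpFormula.XaFree : LfpFormula α → Prop
  | .qf _ => True
  | .existsTrace _ X φ => X ≠ SVar.all ∧ φ.XaFree
  | .forallTrace _ X φ => X ≠ SVar.all ∧ φ.XaFree
  | .fix _ g φ => (∀ i, g.univRange i ≠ SVar.all) ∧ φ.XaFree

def LfpFormula.code : LfpFormula ℕ → ℕ
  | .qf ψ => Nat.pair 0 ψ.code
  | .existsTrace π X φ => Nat.pair 1 (Nat.pair π (Nat.pair X.code φ.code))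
  | .forallTrace π X φ => Nat.pair 2 (Nat.pair π (Nat.pair X.code φ.code))
  | .fix Y g φ => Nat.pair 3 (Nat.pair Y (Nat.pair g.code φ.code))

def LfpModels (T : Set (Trace α)) (φ : LfpFormula α) : Prop := φ.sat (initAssign T)


/-- The atomic propositions `{+, −, s, x}`. -/
abbrev AP4 := Fin 4

def pP : AP4 := 0
def mP : AP4 := 1
def sP : AP4 := 2
def xP : AP4 := 3

/-- The trace `{a}ⁿ {x, a} {a}^ω`. -/
def spikeTrace (a : AP4) (n : ℕ) : Trace AP4 :=
  fun k => if k = n then {xP, a} else {a}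

/-- The unique model of `φ_allSets`:
`{{+}ⁿ{x,+}{+}^ω | n ∈ ℕ} ∪ {{−}ⁿ{x,−}{−}^ω | n ∈ ℕ} ∪
{(t(0)∪{s})(t(1)∪{s})⋯ | t ∈ (2^{x})^ω}`. -/
def TallSets13 : Set (Trace AP4) :=
  {t | ∃ n, t = spikeTrace pP n} ∪ {t | ∃ n, t = spikeTrace mP n} ∪
    {t | ∀ k, t k = {sP} ∨ t k = {sP, xP}}

/-!
Both semantics unfold to the same first-order condition `SatAllSets Q T` on the model `T`; they
differ only in the range `Q` of the set quantifier, and the uniqueness argument only needs `Q` to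
contain every subset of `T`.

The `+`- and `−`-spikes are two copies of each natural number. The base conditions and the
successor step force every spike into a model. A set `X` consisting, for each `n`, of exactly one
copy of `n` encodes a set `A ⊆ ℕ`; such an `X` has no conflict (a `+`- and a `−`-spike at the same
position), so the model must contain an `s`-trace recording `X`, i.e. the `s`-trace with `x`
exactly at `A`. Conversely, for any `X` either there is a conflict, which discharges the matrix,
or the `s`-trace recording the `+`-spikes of `X` is a witness. The `s`-traces alone give `𝔠`
elements.
-/

def QF.and (ψ₁ ψ₂ : QF α) : QF α := .not (.or (.not ψ₁) (.not ψ₂))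

def QF.imp (ψ₁ ψ₂ : QF α) : QF α := .or (.not ψ₁) ψ₂

def QF.eventually (ψ : QF α) : QF α := .untl (.or ψ (.not ψ)) ψ

def QF.always (ψ : QF α) : QF α := .not (.eventually (.not ψ))

def QF.exactlyOnce (a : α) (π : ℕ) : QF α :=
  (QF.atom a π).eventually.and ((QF.atom a π).imp (.next (.always (.not (.atom a π))))).always

section LTL

variable {v : ℕ → Trace α} {i : ℕ} {ψ ψ₁ ψ₂ : QF α}

@[simp] theorem QF.sat_atom {a : α} {π : ℕ} : (QF.atom a π).sat v i ↔ a ∈ v π i := Iff.rfl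

@[simp] theorem QF.sat_not : ψ.not.sat v i ↔ ¬ ψ.sat v i := Iff.rfl

@[simp] theorem QF.sat_or : (ψ₁.or ψ₂).sat v i ↔ ψ₁.sat v i ∨ ψ₂.sat v i := Iff.rfl

@[simp] theorem QF.sat_next : ψ.next.sat v i ↔ ψ.sat v (i + 1) := Iff.rfl

@[simp] theorem QF.sat_and : (ψ₁.and ψ₂).sat v i ↔ ψ₁.sat v i ∧ ψ₂.sat v i := by
  simp [QF.and]

@[simp] theorem QF.sat_imp : (ψ₁.imp ψ₂).sat v i ↔ (ψ₁.sat v i → ψ₂.sat v i) := by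
  simp [QF.imp, imp_iff_not_or]

@[simp] theorem QF.sat_eventually : ψ.eventually.sat v i ↔ ∃ j, i ≤ j ∧ ψ.sat v j := by
  simp [QF.eventually, QF.sat, em]

@[simp] theorem QF.sat_always : ψ.always.sat v i ↔ ∀ j, i ≤ j → ψ.sat v j := by
  simp [QF.always]

theorem QF.sat_exactlyOnce {a : α} {π : ℕ} :
    (QF.exactlyOnce a π).sat v 0 ↔ ∃ n, ∀ k, a ∈ v π k ↔ k = n := by
  simp only [QF.exactlyOnce, QF.sat_and, QF.sat_eventually, QF.sat_always, QF.sat_imp,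
    QF.sat_next, QF.sat_not, QF.sat_atom, zero_le, true_and, forall_const]
  constructor
  · rintro ⟨⟨n, hn⟩, honce⟩
    refine ⟨n, fun k => ⟨fun hk => ?_, fun hk => hk ▸ hn⟩⟩
    rcases lt_trichotomy k n with h | h | h
    · exact absurd hn (honce k hk n h)
    · exact h
    · exact absurd hk (honce n hn k h)
  · rintro ⟨n, hn⟩
    refine ⟨⟨n, (hn n).2 rfl⟩, fun j hj k hk hak => ?_⟩
    rw [hn] at hj hak
    omega

end LTL

theorem sdiff_singleton_eq_singleton_iff {β : Type*} {S : Set β} {a x : β} (ha : a ≠ x) :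
    S \ {x} = {a} ↔ S = {a} ∨ S = {a, x} := by
  constructor
  · intro h
    by_cases hx : x ∈ S
    · right
      rw [← Set.insert_eq_of_mem hx, ← Set.insert_sdiff_singleton, h, Set.pair_comm]
    · left
      rwa [Set.sdiff_singleton_eq_self hx] at h
  · rintro (rfl | rfl)
    · exact Set.sdiff_singleton_eq_self (Ne.symm ha)
    · simp [ha]

theorem pP_ne_xP : pP ≠ xP := by decide

theorem mP_ne_xP : mP ≠ xP := by decide

theorem sP_ne_xP : sP ≠ xP := by decide

theorem mem_spikeTrace {a d : AP4} {n k : ℕ} :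
    d ∈ spikeTrace a n k ↔ d = a ∨ d = xP ∧ k = n := by
  unfold spikeTrace
  split_ifs with h <;> simp [h, or_comm]

theorem eq_spikeTrace_iff {a : AP4} (ha : a ≠ xP) {t : Trace AP4} {n : ℕ} :
    t = spikeTrace a n ↔ ∀ k, t k \ {xP} = {a} ∧ (xP ∈ t k ↔ k = n) := by
  constructor
  · rintro rfl k
    refine ⟨Set.ext fun d => ?_, ?_⟩
    · simp only [Set.mem_sdiff, mem_spikeTrace, Set.mem_singleton_iff]
      constructor
      · rintro ⟨h | h, h'⟩ <;> tauto
      · rintro rfl; exact ⟨.inl rfl, ha⟩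
    · simp [mem_spikeTrace, ha.symm]
  · intro h
    funext k
    ext d
    have hk := Set.ext_iff.1 (h k).1 d
    simp only [Set.mem_sdiff, Set.mem_singleton_iff] at hk
    by_cases hd : d = xP
    · subst hd; simp [mem_spikeTrace, (h k).2, ha.symm]
    · simp [mem_spikeTrace, hd, ← hk]

theorem xP_mem_spikeTrace {a : AP4} (ha : a ≠ xP) {n k : ℕ} : xP ∈ spikeTrace a n k ↔ k = n := by
  simp [mem_spikeTrace, ha.symm]

theorem spikeTrace_imp_iff {a : AP4} (ha : a ≠ xP) {u : Trace AP4} {P : ℕ → Prop} :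
    ((∃ n, u = spikeTrace a n) → ∀ j, xP ∈ u j → P j) ↔
      ∀ n, u = spikeTrace a n → P n := by
  simp only [forall_exists_index]
  refine forall_congr' fun n => ?_
  constructor <;> rintro h rfl
  · exact h rfl n ((xP_mem_spikeTrace ha).2 rfl)
  · intro j hj
    rw [(xP_mem_spikeTrace ha).1 hj]
    exact h rfl

def letterF (a : AP4) (π : ℕ) : QF AP4 :=
  let lit (d : AP4) : QF AP4 := if d = a then .atom d π else .not (.atom d π)
  (lit pP).and ((lit mP).and (lit sP))

theorem sat_letterF {v : ℕ → Trace AP4} {a : AP4} (ha : a ≠ xP) {π i : ℕ} :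
    (letterF a π).sat v i ↔ v π i \ {xP} = {a} := by
  have lit : ∀ d, (if d = a then QF.atom d π else .not (.atom d π)).sat v i ↔
      (d ∈ v π i ↔ d = a) := by
    intro d
    split_ifs with h <;> simp [h]
  simp only [letterF, QF.sat_and, lit, Set.ext_iff, Set.mem_sdiff, Set.mem_singleton_iff]
  constructor
  · rintro ⟨hp, hm, hs⟩ d
    fin_cases d <;> simp_all [pP, mP, sP, xP]
    exact fun h => ha h.symm
  · intro h
    exact ⟨by simpa [pP, xP] using h pP, by simpa [mP, xP] using h mP, by simpa [sP, xP] using h sP⟩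

def spikeF (a : AP4) (π : ℕ) : QF AP4 := (letterF a π).always.and (QF.exactlyOnce xP π)

def sTraceF (π : ℕ) : QF AP4 := (letterF sP π).always

def shapeF (π : ℕ) : QF AP4 := ((spikeF pP π).or (spikeF mP π)).or (sTraceF π)

section Shapes

variable {v : ℕ → Trace AP4} {π : ℕ}

theorem sat_spikeF {a : AP4} (ha : a ≠ xP) :
    (spikeF a π).sat v 0 ↔ ∃ n, v π = spikeTrace a n := by
  simp [spikeF, sat_letterF ha, QF.sat_exactlyOnce, eq_spikeTrace_iff ha, forall_and]

theorem sat_sTraceF : (sTraceF π).sat v 0 ↔ ∀ k, v π k = {sP} ∨ v π k = {sP, xP} := by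
  simp [sTraceF, sat_letterF sP_ne_xP, sdiff_singleton_eq_singleton_iff sP_ne_xP]

theorem sat_shapeF : (shapeF π).sat v 0 ↔ v π ∈ TallSets13 := by
  simp only [shapeF, QF.sat_or, sat_spikeF pP_ne_xP, sat_spikeF mP_ne_xP, sat_sTraceF]
  rfl

end Shapes

def SuccStep (a : AP4) (t t' : Trace AP4) : Prop :=
  a ∈ t 0 → a ∈ t' 0 ∧ ∃ j, xP ∈ t j ∧ xP ∈ t' (j + 1)

def Conflict (t t' : Trace AP4) : Prop := pP ∈ t 0 ∧ mP ∈ t' 0 ∧ ∃ j, xP ∈ t j ∧ xP ∈ t' j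

def Records (t u : Trace AP4) : Prop :=
  sP ∈ t 0 ∧ (∀ n, u = spikeTrace pP n → xP ∈ t n) ∧ (∀ n, u = spikeTrace mP n → xP ∉ t n)

def MatrixHolds (t₀ t₁ t₂ t₃ t₅ t₆ t₇ t₈ : Trace AP4) : Prop :=
  (pP ∈ t₀ 0 ∧ xP ∈ t₀ 0) ∧ (mP ∈ t₁ 0 ∧ xP ∈ t₁ 0) ∧ t₂ ∈ TallSets13 ∧
    SuccStep pP t₂ t₃ ∧ SuccStep mP t₂ t₃ ∧ (Conflict t₅ t₆ ∨ Records t₇ t₈)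

def succStepF (a : AP4) : QF AP4 :=
  (QF.atom a 2).imp ((QF.atom a 3).and ((QF.atom xP 2).and (.next (.atom xP 3))).eventually)

def conflictF : QF AP4 :=
  (QF.atom pP 5).and ((QF.atom mP 6).and ((QF.atom xP 5).and (.atom xP 6)).eventually)

def recordsF : QF AP4 :=
  (QF.atom sP 7).and (((spikeF pP 8).imp ((QF.atom xP 8).imp (.atom xP 7)).always).and
    ((spikeF mP 8).imp ((QF.atom xP 8).imp (.not (.atom xP 7))).always))

def matrixF : QF AP4 :=
  ((QF.atom pP 0).and (.atom xP 0)).and (((QF.atom mP 1).and (.atom xP 1)).and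
    ((shapeF 2).and ((succStepF pP).and ((succStepF mP).and (conflictF.or recordsF)))))

theorem sat_matrixF {v : ℕ → Trace AP4} :
    matrixF.sat v 0 ↔ MatrixHolds (v 0) (v 1) (v 2) (v 3) (v 5) (v 6) (v 7) (v 8) := by
  simp only [matrixF, succStepF, conflictF, recordsF, MatrixHolds, SuccStep, Conflict, Records,
    QF.sat_and, QF.sat_or, QF.sat_imp, QF.sat_atom, QF.sat_eventually, QF.sat_always,
    QF.sat_next, QF.sat_not, sat_shapeF, sat_spikeF pP_ne_xP, sat_spikeF mP_ne_xP,
    spikeTrace_imp_iff pP_ne_xP, spikeTrace_imp_iff mP_ne_xP, zero_le, true_and,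
    true_implies]

-- The quantifier over `π₄` only makes the rest vacuous when `X` is empty.
def phiAllSets : Formula AP4 :=
  .existsTrace 0 .dis <| .existsTrace 1 .dis <| .forallTrace 2 .dis <| .existsTrace 3 .dis <|
    .forallSet 0 <| .forallTrace 4 (.var 0) <| .existsTrace 5 (.var 0) <|
      .existsTrace 6 (.var 0) <| .existsTrace 7 .dis <| .forallTrace 8 (.var 0) <| .qf matrixF

def SatAllSets (Q : Set (Set (Trace AP4))) (T : Set (Trace AP4)) : Prop :=
  ∃ t₀ ∈ T, ∃ t₁ ∈ T, ∀ t₂ ∈ T, ∃ t₃ ∈ T, ∀ X ∈ Q, ∀ _t₄ ∈ X, ∃ t₅ ∈ X, ∃ t₆ ∈ X,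
    ∃ t₇ ∈ T, ∀ t₈ ∈ X, MatrixHolds t₀ t₁ t₂ t₃ t₅ t₆ t₇ t₈

theorem models_phiAllSets_iff {T : Set (Trace AP4)} :
    Models T phiAllSets ↔ SatAllSets Set.univ T := by
  simp [Models, phiAllSets, Formula.sat, initAssign, Assignment.updTr, Assignment.updSo,
    sat_matrixF, SatAllSets, Function.update]

theorem modelsCW_phiAllSets_iff {T : Set (Trace AP4)} :
    ModelsCW T phiAllSets ↔ SatAllSets {X | X ⊆ T} T := by
  simp [ModelsCW, phiAllSets, Formula.satCW, initAssignCW, Assignment.updTr, Assignment.updSo,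
    sat_matrixF, SatAllSets, Function.update]

theorem phiAllSets_isSentence : phiAllSets.IsSentence := by
  constructor
  · ext n
    simp only [phiAllSets, Formula.freeTraceVars, matrixF, succStepF, conflictF, recordsF,
      shapeF, spikeF, sTraceF, letterF, QF.exactlyOnce, QF.and, QF.imp, QF.eventually,
      QF.always, QF.traceVars, apply_ite, ite_self, Set.mem_union, Set.mem_sdiff,
      Set.mem_singleton_iff, Set.mem_empty_iff_false, iff_false]
    omega
  · intro X hX
    simp only [phiAllSets, Formula.freeSetVars, Set.mem_sdiff, Set.mem_insert_iff,
      Set.mem_singleton_iff, Set.mem_empty_iff_false] at hX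
    simp only [Set.mem_insert_iff, Set.mem_singleton_iff]
    tauto

theorem phiAllSets_xaFree : phiAllSets.XaFree := by
  simp [phiAllSets, Formula.XaFree]

open Classical in
def sTrace (A : Set ℕ) : Trace AP4 := fun k => if k ∈ A then {sP, xP} else {sP}

theorem xP_mem_sTrace {A : Set ℕ} {k : ℕ} : xP ∈ sTrace A k ↔ k ∈ A := by
  unfold sTrace
  split_ifs with h <;> simp [h, sP_ne_xP.symm]

theorem sP_mem_sTrace {A : Set ℕ} {k : ℕ} : sP ∈ sTrace A k := by
  unfold sTrace
  split_ifs <;> simp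

theorem sTrace_mem_tallSets13 {A : Set ℕ} : sTrace A ∈ TallSets13 :=
  .inr fun k => by unfold sTrace; split_ifs <;> simp

theorem sTrace_injective : Function.Injective sTrace := fun A B h =>
  Set.ext fun k => by rw [← xP_mem_sTrace, h, xP_mem_sTrace]

theorem eq_sTrace_of_xP_mem_iff {t : Trace AP4} (ht : ∀ k, t k = {sP} ∨ t k = {sP, xP})
    {A : Set ℕ} (hA : ∀ k, xP ∈ t k ↔ k ∈ A) : t = sTrace A := by
  funext k
  have := hA k
  rcases ht k with h | h <;> simp_all [sTrace, sP_ne_xP.symm]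

def spikeSet (A : Set ℕ) : Set (Trace AP4) := spikeTrace pP '' A ∪ spikeTrace mP '' Aᶜ

theorem spikeSet_nonempty (A : Set ℕ) : (spikeSet A).Nonempty := by
  by_cases h : 0 ∈ A
  exacts [⟨_, .inl ⟨0, h, rfl⟩⟩, ⟨_, .inr ⟨0, h, rfl⟩⟩]

theorem not_conflict_of_mem_spikeSet {A : Set ℕ} {t t' : Trace AP4} (ht : t ∈ spikeSet A)
    (ht' : t' ∈ spikeSet A) : ¬ Conflict t t' := by
  rintro ⟨hp, hm, j, hj, hj'⟩
  rcases ht with ⟨n, hn, rfl⟩ | ⟨n, -, rfl⟩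
  · rcases ht' with ⟨m, -, rfl⟩ | ⟨m, hm', rfl⟩
    · simp [mem_spikeTrace, pP, mP, xP] at hm
    · rw [xP_mem_spikeTrace pP_ne_xP] at hj
      rw [xP_mem_spikeTrace mP_ne_xP] at hj'
      exact hm' (hj' ▸ hj ▸ hn)
  · simp [mem_spikeTrace, pP, mP, xP] at hp

theorem conflict_spikeTrace (n : ℕ) : Conflict (spikeTrace pP n) (spikeTrace mP n) :=
  ⟨by simp [mem_spikeTrace], by simp [mem_spikeTrace], n, by simp [mem_spikeTrace]⟩

theorem exists_succStep {t : Trace AP4} (ht : t ∈ TallSets13) :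
    ∃ t' ∈ TallSets13, SuccStep pP t t' ∧ SuccStep mP t t' := by
  rcases ht with (⟨n, rfl⟩ | ⟨n, rfl⟩) | hs
  · refine ⟨spikeTrace pP (n + 1), .inl (.inl ⟨_, rfl⟩), fun _ => ⟨?_, n, ?_⟩, fun h => ?_⟩ <;>
      simp_all [mem_spikeTrace, pP, mP, xP]
  · refine ⟨spikeTrace mP (n + 1), .inl (.inr ⟨_, rfl⟩), fun h => ?_, fun _ => ⟨?_, n, ?_⟩⟩ <;>
      simp_all [mem_spikeTrace, pP, mP, xP]
  · refine ⟨_, .inr hs, fun h => ?_, fun h => ?_⟩ <;>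
      rcases hs 0 with h0 | h0 <;> simp [h0, pP, mP, sP, xP] at h

theorem exists_records_of_forall_not_conflict {X : Set (Trace AP4)}
    (hX : ∀ t ∈ X, ∀ t' ∈ X, ¬ Conflict t t') : ∃ t ∈ TallSets13, ∀ u ∈ X, Records t u := by
  refine ⟨sTrace {n | spikeTrace pP n ∈ X}, sTrace_mem_tallSets13, fun u hu =>
    ⟨sP_mem_sTrace, ?_, ?_⟩⟩ <;> rintro n rfl <;> rw [xP_mem_sTrace]
  · exact hu
  · exact fun hp => hX _ hp _ hu (conflict_spikeTrace n)

theorem satAllSets_tallSets13 (Q : Set (Set (Trace AP4))) : SatAllSets Q TallSets13 := by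
  have hbase : (pP ∈ spikeTrace pP 0 0 ∧ xP ∈ spikeTrace pP 0 0) ∧
      (mP ∈ spikeTrace mP 0 0 ∧ xP ∈ spikeTrace mP 0 0) := by
    simp [mem_spikeTrace]
  refine ⟨_, .inl (.inl ⟨0, rfl⟩), _, .inl (.inr ⟨0, rfl⟩), fun t₂ h₂ => ?_⟩
  obtain ⟨t₃, h₃, hp, hm⟩ := exists_succStep h₂
  refine ⟨t₃, h₃, fun X _ t₄ h₄ => ?_⟩
  by_cases hc : ∀ t ∈ X, ∀ t' ∈ X, ¬ Conflict t t'
  · obtain ⟨t₇, h₇, hr⟩ := exists_records_of_forall_not_conflict hc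
    exact ⟨t₄, h₄, t₄, h₄, t₇, h₇, fun t₈ h₈ => ⟨hbase.1, hbase.2, h₂, hp, hm, .inr (hr t₈ h₈)⟩⟩
  · push Not at hc
    obtain ⟨t₅, h₅, t₆, h₆, hc⟩ := hc
    exact ⟨t₅, h₅, t₆, h₆, t₂, h₂, fun _ _ => ⟨hbase.1, hbase.2, h₂, hp, hm, .inl hc⟩⟩

theorem eq_spikeTrace_of_mem_tallSets13 {a : AP4} (ha : a = pP ∨ a = mP) {t : Trace AP4}
    (ht : t ∈ TallSets13) (hat : a ∈ t 0) {n : ℕ} (hx : xP ∈ t n) : t = spikeTrace a n := by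
  rcases ht with (⟨m, rfl⟩ | ⟨m, rfl⟩) | hs <;> rcases ha with rfl | rfl
  · rw [(xP_mem_spikeTrace pP_ne_xP).1 hx]
  · simp [mem_spikeTrace, pP, mP, xP] at hat
  · simp [mem_spikeTrace, pP, mP, xP] at hat
  · rw [(xP_mem_spikeTrace mP_ne_xP).1 hx]
  all_goals rcases hs 0 with h0 | h0 <;> simp [h0, pP, mP, sP, xP] at hat

theorem spikeTrace_mem_of_succStep {T : Set (Trace AP4)} {a : AP4} (ha : a = pP ∨ a = mP)
    (hT : T ⊆ TallSets13) (h₀ : ∃ t ∈ T, a ∈ t 0 ∧ xP ∈ t 0)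
    (hsucc : ∀ t ∈ T, ∃ t' ∈ T, SuccStep a t t') (n : ℕ) : spikeTrace a n ∈ T := by
  have hax : a ≠ xP := by rcases ha with rfl | rfl <;> decide
  induction n with
  | zero =>
    obtain ⟨t, ht, hat, hx⟩ := h₀
    rwa [← eq_spikeTrace_of_mem_tallSets13 ha (hT ht) hat hx]
  | succ n ih =>
    obtain ⟨t', ht', hstep⟩ := hsucc _ ih
    obtain ⟨hat', j, hj, hj'⟩ := hstep (by simp [mem_spikeTrace])
    rw [(xP_mem_spikeTrace hax).1 hj] at hj'
    rwa [← eq_spikeTrace_of_mem_tallSets13 ha (hT ht') hat' hj']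

theorem sTrace_mem_of_records {T : Set (Trace AP4)} (hT : T ⊆ TallSets13) {A : Set ℕ}
    {t : Trace AP4} (ht : t ∈ T) (hr : ∀ u ∈ spikeSet A, Records t u) : sTrace A ∈ T := by
  obtain ⟨u, hu⟩ := spikeSet_nonempty A
  have hs : ∀ k, t k = {sP} ∨ t k = {sP, xP} := by
    rcases hT ht with (⟨m, rfl⟩ | ⟨m, rfl⟩) | hs
    · simpa [mem_spikeTrace, pP, sP, xP] using (hr u hu).1
    · simpa [mem_spikeTrace, mP, sP, xP] using (hr u hu).1
    · exact hs
  have hA : ∀ k, xP ∈ t k ↔ k ∈ A := fun k => by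
    by_cases hk : k ∈ A
    · exact iff_of_true ((hr _ (.inl ⟨k, hk, rfl⟩)).2.1 k rfl) hk
    · exact iff_of_false ((hr _ (.inr ⟨k, hk, rfl⟩)).2.2 k rfl) hk
  rwa [← eq_sTrace_of_xP_mem_iff hs hA]

theorem eq_tallSets13_of_satAllSets {Q : Set (Set (Trace AP4))} {T : Set (Trace AP4)}
    (hQ : ∀ X ⊆ T, X ∈ Q) (h : SatAllSets Q T) : T = TallSets13 := by
  obtain ⟨t₀, h₀, t₁, h₁, H⟩ := h
  have hloc : ∀ t ∈ T, (pP ∈ t₀ 0 ∧ xP ∈ t₀ 0) ∧ (mP ∈ t₁ 0 ∧ xP ∈ t₁ 0) ∧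
      t ∈ TallSets13 ∧ ∃ t' ∈ T, SuccStep pP t t' ∧ SuccStep mP t t' := by
    intro t ht
    obtain ⟨t₃, h₃, H'⟩ := H t ht
    obtain ⟨_, -, _, -, _, -, hM⟩ := H' {t} (hQ _ (Set.singleton_subset_iff.2 ht)) t rfl
    obtain ⟨hb₀, hb₁, hshape, hp, hm, -⟩ := hM t rfl
    exact ⟨hb₀, hb₁, hshape, t₃, h₃, hp, hm⟩
  have hsub : T ⊆ TallSets13 := fun t ht => (hloc t ht).2.2.1
  have hspikeP := spikeTrace_mem_of_succStep (.inl rfl) hsub ⟨t₀, h₀, (hloc t₀ h₀).1⟩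
    fun t ht => (hloc t ht).2.2.2.imp fun _ => .imp_right And.left
  have hspikeM := spikeTrace_mem_of_succStep (.inr rfl) hsub ⟨t₁, h₁, (hloc t₀ h₀).2.1⟩
    fun t ht => (hloc t ht).2.2.2.imp fun _ => .imp_right And.right
  have hsTrace : ∀ A, sTrace A ∈ T := by
    intro A
    have hX : spikeSet A ⊆ T := Set.union_subset
      (Set.image_subset_iff.2 fun n _ => hspikeP n) (Set.image_subset_iff.2 fun n _ => hspikeM n)
    obtain ⟨t₄, h₄⟩ := spikeSet_nonempty A
    obtain ⟨_, -, H'⟩ := H t₀ h₀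
    obtain ⟨t₅, h₅, t₆, h₆, t₇, h₇, hM⟩ := H' _ (hQ _ hX) t₄ h₄
    exact sTrace_mem_of_records hsub h₇ fun u hu =>
      (hM u hu).2.2.2.2.2.resolve_left (not_conflict_of_mem_spikeSet h₅ h₆)
  refine hsub.antisymm ?_
  rintro t ((⟨n, rfl⟩ | ⟨n, rfl⟩) | ht)
  · exact hspikeP n
  · exact hspikeM n
  · rw [eq_sTrace_of_xP_mem_iff ht (A := {k | xP ∈ t k}) fun _ => Iff.rfl]
    exact hsTrace _

open Cardinal in
theorem mk_tallSets13 : #TallSets13 = 𝔠 := by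
  apply le_antisymm
  · calc #TallSets13 ≤ #(Trace AP4) := mk_set_le _
      _ = #(Set AP4) ^ ℵ₀ := by simp
      _ ≤ 𝔠 ^ ℵ₀ := power_le_power_right ((lt_aleph0_of_finite _).le.trans aleph0_le_continuum)
      _ = 𝔠 := continuum_power_aleph0
  · calc 𝔠 = #(Set ℕ) := by rw [mk_set, mk_nat, two_power_aleph0]
      _ ≤ #TallSets13 := mk_le_of_injective (f := fun A => ⟨sTrace A, sTrace_mem_tallSets13⟩)
          fun _ _ h => sTrace_injective (congrArg Subtype.val h)

/-- There is a satisfiable `Xₐ`-free Hyper²LTL sentence all of whose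
models have cardinality exactly `𝔠`, under both standard and closed-world semantics;
concretely, over `AP = {+, −, s, x}` there is a sentence whose unique model under both
semantics is the uncountable set `TallSets13`. -/
theorem exists_sentence_with_unique_continuum_model :
    ∃ φ : Formula AP4, φ.IsSentence ∧ φ.XaFree ∧
      (∃ T : Set (Trace AP4), Models T φ) ∧
      (∀ T : Set (Trace AP4), Models T φ ↔ T = TallSets13) ∧
      (∀ T : Set (Trace AP4), ModelsCW T φ ↔ T = TallSets13) ∧
      (∀ T : Set (Trace AP4), Models T φ → Cardinal.mk T = Cardinal.continuum) ∧
      (∀ T : Set (Trace AP4), ModelsCW T φ → Cardinal.mk T = Cardinal.continuum) := by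
  have hstd : ∀ T, Models T phiAllSets ↔ T = TallSets13 := fun T =>
    models_phiAllSets_iff.trans ⟨eq_tallSets13_of_satAllSets fun _ _ => Set.mem_univ _,
      by rintro rfl; exact satAllSets_tallSets13 _⟩
  have hcw : ∀ T, ModelsCW T phiAllSets ↔ T = TallSets13 := fun T =>
    modelsCW_phiAllSets_iff.trans ⟨eq_tallSets13_of_satAllSets fun _ hX => hX,
      by rintro rfl; exact satAllSets_tallSets13 _⟩
  refine ⟨phiAllSets, phiAllSets_isSentence, phiAllSets_xaFree, ⟨_, (hstd _).2 rfl⟩, hstd, hcw,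
    fun T h => ?_, fun T h => ?_⟩
  · rw [(hstd T).1 h, mk_tallSets13]
  · rw [(hcw T).1 h, mk_tallSets13]

end Hyper2
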